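/- arXiv:2301.04920 — 5 statements merged into one kernel-verified Lean document; each statement's English description precedes it below -/
import Mathlib

section
/- Assume n ≤ 3t. Let base : Fin n → Option V be an input configuration with exactly n − t process-proposal pairs, i.e., |π(base)| = n − t, and let p : Fin n → V be any total assignment of proposals. Then there exists c' : Fin n → Option V with |π(c')| = n − t such that c' i = some (p i) for every i ∈ π(c'), and c' is compatible with base. (This is the combinatorial construction used to show that, for n ≤ 3t, every full input configuration admits a companion configuration of size n − t that borrows its proposals while being compatible with the fixed base configuration.) -/
/-- The support of a partial assignment of proposals. -/
def supp {n : ℕ} {V : Type*} (c : Fin n → Option V) : Finset (Fin n) :=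
  Finset.univ.filter (fun i => (c i).isSome)

/-- Compatibility relation between assignments. -/
def Compatible {n : ℕ} {V : Type*} (t : ℕ) (c₁ c₂ : Fin n → Option V) : Prop :=
  (supp c₁ ∩ supp c₂).card ≤ t ∧ (supp c₁ \ supp c₂).Nonempty ∧ (supp c₂ \ supp c₁).Nonempty

/-!
Let `B` be the support of `base`, so `Bᶜ` has `t` elements. Take `S` made of `min (n - t) t ≥ 1`
points outside `B` and `n - 2t` points of `B`: then `|S| = n - t`, `|S ∩ B| = n - 2t ≤ t` because
`n ≤ 3t`, and `B \ S` is nonempty since `S` meets `B` in fewer than `n - t` points. The companion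
configuration proposes `p i` exactly on `S`.
-/

open Finset

theorem Finset.exists_card_sdiff_eq_card_inter_eq {α : Type*} [Fintype α] [DecidableEq α]
    (B : Finset α) {a b : ℕ} (ha : a ≤ #Bᶜ) (hb : b ≤ #B) :
    ∃ S : Finset α, #(S \ B) = a ∧ #(S ∩ B) = b := by
  obtain ⟨U, hUB, rfl⟩ := exists_subset_card_eq ha
  obtain ⟨T, hTB, rfl⟩ := exists_subset_card_eq hb
  have hU : Disjoint U B := disjoint_left.mpr fun _ hx => mem_compl.mp (hUB hx)
  refine ⟨U ∪ T, ?_, ?_⟩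
  · rw [union_sdiff_distrib, sdiff_eq_self_of_disjoint hU, sdiff_eq_empty_iff_subset.mpr hTB,
      union_empty]
  · rw [union_inter_distrib_right, disjoint_iff_inter_eq_empty.mp hU, inter_eq_left.mpr hTB,
      empty_union]

section restrictTo

variable {n : ℕ} {V : Type*}

def restrictTo (S : Finset (Fin n)) (p : Fin n → V) : Fin n → Option V :=
  fun i => if i ∈ S then some (p i) else none

@[simp]
theorem supp_restrictTo (S : Finset (Fin n)) (p : Fin n → V) :
    supp (restrictTo S p) = S := by
  ext i
  by_cases h : i ∈ S <;> simp [supp, restrictTo, h]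

theorem restrictTo_of_mem {S : Finset (Fin n)} (p : Fin n → V) {i : Fin n} (hi : i ∈ S) :
    restrictTo S p i = some (p i) :=
  if_pos hi

end restrictTo

theorem compatible_companion_configuration
    (n t : ℕ) (ht : 0 < t) (htn : t < n) (hn : n ≤ 3 * t) (V : Type*)
    (base : Fin n → Option V) (hbase : (supp base).card = n - t)
    (p : Fin n → V) :
    ∃ c' : Fin n → Option V,
      (supp c').card = n - t ∧
      (∀ i ∈ supp c', c' i = some (p i)) ∧
      Compatible t c' base := by
  set B := supp base
  have hBc : #Bᶜ = t := by rw [card_compl, hbase, Fintype.card_fin]; omega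
  obtain ⟨S, hout, hin⟩ := B.exists_card_sdiff_eq_card_inter_eq (a := min (n - t) t)
    (b := n - 2 * t) (by omega) (by omega)
  have hcard : #S = n - t := by rw [← card_sdiff_add_card_inter S B, hout, hin]; omega
  have hmissed : #(B \ S) = n - t - (n - 2 * t) := by rw [card_sdiff, hin, hbase]
  refine ⟨restrictTo S p, ?_, fun i hi => restrictTo_of_mem p ?_, ?_, ?_, ?_⟩
  · rwa [supp_restrictTo]
  · rwa [supp_restrictTo] at hi
  · rw [supp_restrictTo, hin]; omega
  · rw [supp_restrictTo, ← card_pos, hout]; omega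
  · rw [supp_restrictTo, ← card_pos, hmissed]; omega
end

section
/- Assume n > 3t. Let c : Fin n → Option V be an input configuration (n − t ≤ |π(c)|) and let Q ∈ π(c). Then there exists an input configuration c' : Fin n → Option V with n − t ≤ |π(c')| such that Q ∉ π(c') and c' is similar to c. (This is the combinatorial construction, used in the quadratic lower bound, of an input configuration that excludes a designated process Q yet remains similar to the original configuration.) -/
/-- Two assignments are similar: common support is nonempty and they agree on it. -/
def SimilarConfig {n : ℕ} {V : Type*} (c₁ c₂ : Fin n → Option V) : Prop :=
  (supp c₁ ∩ supp c₂).Nonempty ∧ ∀ i ∈ supp c₁ ∩ supp c₂, c₁ i = c₂ i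

/-!
Since `|π(c)| ≥ n - t ≥ 2`, `c` is defined at some process `a ≠ Q`; let `v` be its value there.
Undefine `Q` and fill every other undefined entry with `v`: the new support is everything but `Q`,
of size `n - 1 ≥ n - t`, and the new configuration agrees with `c` on `π(c) \ {Q} ∋ a`.
-/

section CompleteExcept

variable {n : ℕ} {V : Type*}

theorem mem_supp {c : Fin n → Option V} {i : Fin n} : i ∈ supp c ↔ (c i).isSome := by
  simp [supp]

def completeExcept (c : Fin n → Option V) (v : V) (Q : Fin n) : Fin n → Option V :=
  Function.update (fun i => some ((c i).getD v)) Q none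

theorem supp_completeExcept (c : Fin n → Option V) (v : V) (Q : Fin n) :
    supp (completeExcept c v Q) = Finset.univ.erase Q := by
  ext i
  by_cases hi : i = Q <;> simp [mem_supp, completeExcept, hi]

theorem completeExcept_apply_of_mem_supp {c : Fin n → Option V} (v : V) {Q i : Fin n}
    (hi : i ∈ supp c) (hiQ : i ≠ Q) : completeExcept c v Q i = c i := by
  obtain ⟨w, hw⟩ := Option.isSome_iff_exists.mp (mem_supp.mp hi)
  simp [completeExcept, hiQ, hw]

theorem similarConfig_completeExcept {c : Fin n → Option V} (v : V) {Q a : Fin n}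
    (ha : a ∈ supp c) (haQ : a ≠ Q) : SimilarConfig (completeExcept c v Q) c := by
  simp only [SimilarConfig, supp_completeExcept, Finset.mem_inter, Finset.mem_erase]
  exact ⟨⟨a, Finset.mem_inter.mpr ⟨Finset.mem_erase.mpr ⟨haQ, Finset.mem_univ a⟩, ha⟩⟩,
    fun i ⟨⟨hiQ, _⟩, hi⟩ => completeExcept_apply_of_mem_supp v hi hiQ⟩

end CompleteExcept

theorem exclude_process_similar_configuration_general
    (n t : ℕ) (ht : 0 < t) (hn : n > 3 * t) (V : Type*)
    (c : Fin n → Option V) (hc : n - t ≤ (supp c).card)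
    (Q : Fin n) :
    ∃ c' : Fin n → Option V,
      n - t ≤ (supp c').card ∧ Q ∉ supp c' ∧ SimilarConfig c' c := by
  obtain ⟨a, ha, haQ⟩ := Finset.exists_mem_ne (by omega : 1 < (supp c).card) Q
  obtain ⟨v, -⟩ := Option.isSome_iff_exists.mp (mem_supp.mp ha)
  refine ⟨completeExcept c v Q, ?_, ?_, similarConfig_completeExcept v ha haQ⟩
  · rw [supp_completeExcept, Finset.card_erase_of_mem (Finset.mem_univ Q), Finset.card_univ,
      Fintype.card_fin]
    omega
  · simp [supp_completeExcept]

theorem exclude_process_similar_configuration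
    (n t : ℕ) (ht : 0 < t) (htn : t < n) (hn : n > 3 * t) (V : Type*)
    (c : Fin n → Option V) (hc : n - t ≤ (supp c).card)
    (Q : Fin n) (hQ : Q ∈ supp c) :
    ∃ c' : Fin n → Option V,
      n - t ≤ (supp c').card ∧ Q ∉ supp c' ∧ SimilarConfig c' c :=
  exclude_process_similar_configuration_general n t ht hn V c hc Q
end

section
/- Assume n > 3t. Let c : Fin n → Option V have |π(c)| = n − t, and let c₁, c₂ : Fin n → Option V be input configurations (n − t ≤ |π(c₁)| and n − t ≤ |π(c₂)|), each similar to c. If c₁ is unanimous with value w₁ (i.e., c₁ i = some w₁ for every i ∈ π(c₁)) and c₂ is unanimous with value w₂ (i.e., c₂ i = some w₂ for every i ∈ π(c₂)), then w₁ = w₂. (Thus, when n > 3t, at most one value can be the unanimous proposal of an input configuration similar to a given configuration of n − t process-proposal pairs.) -/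
/-- Two assignments are similar: common support is nonempty and they agree on it. -/
def SimilarAssign {n : ℕ} {V : Type*} (c₁ c₂ : Fin n → Option V) : Prop :=
  (supp c₁ ∩ supp c₂).Nonempty ∧ ∀ i ∈ supp c₁ ∩ supp c₂, c₁ i = c₂ i

/-! Each support misses at most `t` of the `n` processes, and `3t < n`, so the supports of
`c₁`, `c₂` and `c` share a process `i`; similarity gives `some w₁ = c₁ i = c i = c₂ i = some w₂`. -/

namespace Finset

variable {α : Type*} [Fintype α] [DecidableEq α]

theorem card_add_card_le_card_inter_add_card_univ (s t : Finset α) :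
    #s + #t ≤ #(s ∩ t) + Fintype.card α := by
  rw [← card_inter_add_card_union]
  exact Nat.add_le_add_left (card_le_univ _) _

theorem inter_inter_nonempty_of_two_mul_card_lt (s t u : Finset α)
    (h : 2 * Fintype.card α < #s + #t + #u) : (s ∩ t ∩ u).Nonempty := by
  have hst := card_add_card_le_card_inter_add_card_univ s t
  refine inter_nonempty_of_card_lt_card_add_card (subset_univ _) (subset_univ _) ?_
  rw [card_univ]
  omega

end Finset

theorem SimilarAssign.apply_eq {n : ℕ} {V : Type*} {c₁ c₂ : Fin n → Option V}
    (h : SimilarAssign c₁ c₂) {i : Fin n} (hi₁ : i ∈ supp c₁) (hi₂ : i ∈ supp c₂) :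
    c₁ i = c₂ i :=
  h.2 i (Finset.mem_inter.2 ⟨hi₁, hi₂⟩)

theorem unique_unanimous_value_of_similar_configurations_general
    (n t : ℕ) (hn : n > 3 * t) (V : Type*)
    (c : Fin n → Option V) (hc : (supp c).card = n - t)
    (c₁ c₂ : Fin n → Option V)
    (h₁ : n - t ≤ (supp c₁).card) (h₂ : n - t ≤ (supp c₂).card)
    (hsim₁ : SimilarAssign c₁ c) (hsim₂ : SimilarAssign c₂ c)
    (w₁ w₂ : V)
    (huna₁ : ∀ i ∈ supp c₁, c₁ i = some w₁)
    (huna₂ : ∀ i ∈ supp c₂, c₂ i = some w₂) :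
    w₁ = w₂ := by
  have hcard : 2 * Fintype.card (Fin n) < (supp c₁).card + (supp c₂).card + (supp c).card := by
    rw [Fintype.card_fin]
    omega
  obtain ⟨i, hi⟩ := Finset.inter_inter_nonempty_of_two_mul_card_lt _ _ _ hcard
  simp only [Finset.mem_inter] at hi
  obtain ⟨⟨hi₁, hi₂⟩, hi⟩ := hi
  apply Option.some_injective
  rw [← huna₁ i hi₁, ← huna₂ i hi₂, hsim₁.apply_eq hi₁ hi, hsim₂.apply_eq hi₂ hi]

theorem unique_unanimous_value_of_similar_configurations
    (n t : ℕ) (ht : 0 < t) (htn : t < n) (hn : n > 3 * t) (V : Type*)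
    (c : Fin n → Option V) (hc : (supp c).card = n - t)
    (c₁ c₂ : Fin n → Option V)
    (h₁ : n - t ≤ (supp c₁).card) (h₂ : n - t ≤ (supp c₂).card)
    (hsim₁ : SimilarAssign c₁ c) (hsim₂ : SimilarAssign c₂ c)
    (w₁ w₂ : V)
    (huna₁ : ∀ i ∈ supp c₁, c₁ i = some w₁)
    (huna₂ : ∀ i ∈ supp c₂, c₂ i = some w₂) :
    w₁ = w₂ :=
  unique_unanimous_value_of_similar_configurations_general n t hn V c hc c₁ c₂ h₁ h₂ hsim₁ hsim₂ w₁
    w₂ huna₁ huna₂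
end

section
/- Strong Validity satisfies the similarity condition when n > 3t: assume n > 3t and V is nonempty. Then for every c : Fin n → Option V with |π(c)| = n − t there exists a value v : V such that, for every input configuration c' : Fin n → Option V (with n − t ≤ |π(c')|) that is similar to c and every w : V, if c' i = some w for all i ∈ π(c') then w = v. (Equivalently, v belongs to the set of Strong-Validity-admissible decisions of every input configuration similar to c, where Strong Validity admits only the unanimous value when all proposals agree, and admits every value otherwise.) -/
open Finset

/-!
If `c'` is unanimous on `w` and agrees with `c` on their common support, then `c` proposes `w`
on all of `supp c' ∩ supp c`, which has at least `|supp c| - t` elements when `c'` has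
`n - t` proposals. Two distinct unanimous values would therefore need
`2 (|supp c| - t) ≤ |supp c|` disjoint positions of `supp c`, impossible once `|supp c| > 2t`,
which holds for `|supp c| = n - t` and `n > 3t`.
-/

theorem Set.Subsingleton.exists_subset_singleton {α : Type*} [Nonempty α] {s : Set α}
    (hs : s.Subsingleton) : ∃ a, s ⊆ {a} := by
  obtain rfl | ⟨a, rfl⟩ := hs.eq_empty_or_singleton
  · exact ⟨Classical.arbitrary α, Set.empty_subset _⟩
  · exact ⟨a, subset_rfl⟩

theorem Finset.card_filter_eq_add_card_filter_eq_le {ι β : Type*} [DecidableEq β] (s : Finset ι)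
    (f : ι → β) {a b : β} (hab : a ≠ b) :
    #(s.filter (f · = a)) + #(s.filter (f · = b)) ≤ #s := by
  calc #(s.filter (f · = a)) + #(s.filter (f · = b))
      ≤ #(s.filter (f · = a)) + #(s.filter (¬ f · = a)) := by
        gcongr
        exact fun hb ↦ hb ▸ hab.symm
    _ = #s := s.card_filter_add_card_filter_not _

section Unanimity

variable {n : ℕ} {V : Type*}

theorem card_supp_add_card_supp_le_add_card_eq_some [DecidableEq V] {c' c : Fin n → Option V}
    {w : V} (hagree : ∀ i ∈ supp c' ∩ supp c, c' i = c i) (hw : ∀ i ∈ supp c', c' i = some w) :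
    #(supp c') + #(supp c) ≤ n + #((supp c).filter (c · = some w)) := by
  have hsub : supp c' ∩ supp c ⊆ (supp c).filter (c · = some w) := fun i hi ↦ by
    have hi' := mem_inter.mp hi
    exact mem_filter.mpr ⟨hi'.2, hagree i hi ▸ hw i hi'.1⟩
  calc #(supp c') + #(supp c) = #(supp c' ∩ supp c) + #(supp c' ∪ supp c) :=
        (card_inter_add_card_union _ _).symm
    _ ≤ #((supp c).filter (c · = some w)) + n := by
        gcongr
        simpa using card_le_univ (supp c' ∪ supp c)
    _ = n + #((supp c).filter (c · = some w)) := add_comm _ _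

theorem unanimous_eq_of_similarAssign {t : ℕ} {c : Fin n → Option V} (hc : 2 * t < #(supp c))
    {c₁ c₂ : Fin n → Option V} {w₁ w₂ : V}
    (hc₁ : n - t ≤ #(supp c₁)) (hsim₁ : SimilarAssign c₁ c)
    (hw₁ : ∀ i ∈ supp c₁, c₁ i = some w₁)
    (hc₂ : n - t ≤ #(supp c₂)) (hsim₂ : SimilarAssign c₂ c)
    (hw₂ : ∀ i ∈ supp c₂, c₂ i = some w₂) :
    w₁ = w₂ := by
  classical
  by_contra hne
  have h₁ := card_supp_add_card_supp_le_add_card_eq_some hsim₁.2 hw₁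
  have h₂ := card_supp_add_card_supp_le_add_card_eq_some hsim₂.2 hw₂
  have hcount := (supp c).card_filter_eq_add_card_filter_eq_le c (Option.some_injective _ |>.ne hne)
  have hcn : #(supp c) ≤ n := by simpa using card_le_univ (supp c)
  omega

end Unanimity

theorem strong_validity_similarity_condition_general
    (n t : ℕ) (hn : n > 3 * t)
    (V : Type*) [Nonempty V]
    (c : Fin n → Option V) (hc : (supp c).card = n - t) :
    ∃ v : V, ∀ c' : Fin n → Option V,
      n - t ≤ (supp c').card → SimilarAssign c' c →
      ∀ w : V, (∀ i ∈ supp c', c' i = some w) → w = v := by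
  let unanimous : Set V := {w | ∃ c' : Fin n → Option V,
    n - t ≤ #(supp c') ∧ SimilarAssign c' c ∧ ∀ i ∈ supp c', c' i = some w}
  have hsub : unanimous.Subsingleton := by
    rintro w₁ ⟨c₁, hc₁, hsim₁, hw₁⟩ w₂ ⟨c₂, hc₂, hsim₂, hw₂⟩
    exact unanimous_eq_of_similarAssign (by omega) hc₁ hsim₁ hw₁ hc₂ hsim₂ hw₂
  obtain ⟨v, hv⟩ := hsub.exists_subset_singleton
  exact ⟨v, fun c' hc' hsim w hw ↦ hv ⟨c', hc', hsim, hw⟩⟩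

theorem strong_validity_similarity_condition
    (n t : ℕ) (ht : 0 < t) (htn : t < n) (hn : n > 3 * t)
    (V : Type*) [Nonempty V]
    (c : Fin n → Option V) (hc : (supp c).card = n - t) :
    ∃ v : V, ∀ c' : Fin n → Option V,
      n - t ≤ (supp c').card → SimilarAssign c' c →
      ∀ w : V, (∀ i ∈ supp c', c' i = some w) → w = v :=
  strong_validity_similarity_condition_general n t hn V c hc
end

section
/- Weak Validity satisfies the similarity condition: assume V is nonempty. Then for every c : Fin n → Option V with |π(c)| = n − t there exists a value v : V such that, for every ĉ : Fin n → Option V with full support (ĉ i ≠ none for all i : Fin n) that is similar to c and every w : V, if ĉ i = some w for all i : Fin n then w = v. (Equivalently, v belongs to the set of Weak-Validity-admissible decisions of every input configuration similar to c, where Weak Validity admits only the unanimous value when all n processes are correct and propose the same value, and admits every value otherwise.) -/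
/-!
A configuration with full support that is similar to `c` agrees with `c` on all of `π(c)`,
which is nonempty because `n - t > 0`. So a unanimous such configuration must carry the value
`c` proposes at any fixed process of `π(c)`, and that value is the witness.
-/

section Similarity

variable {n : ℕ} {V : Type*}

theorem mem_supp_iff {c : Fin n → Option V} {i : Fin n} : i ∈ supp c ↔ c i ≠ none := by
  simp [supp, Option.isSome_iff_ne_none]

theorem SimilarAssign.apply_eq_of_mem_supp {c₁ c₂ : Fin n → Option V}
    (h : SimilarAssign c₁ c₂) (hfull : ∀ i, c₁ i ≠ none) {i : Fin n} (hi : i ∈ supp c₂) :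
    c₁ i = c₂ i :=
  h.2 i (Finset.mem_inter.mpr ⟨mem_supp_iff.mpr (hfull i), hi⟩)

end Similarity

theorem weak_validity_similarity_condition_general
    (n t : ℕ) (htn : t < n)
    (V : Type*)
    (c : Fin n → Option V) (hc : (supp c).card = n - t) :
    ∃ v : V, ∀ chat : Fin n → Option V,
      (∀ i : Fin n, chat i ≠ none) → SimilarAssign chat c →
      ∀ w : V, (∀ i : Fin n, chat i = some w) → w = v := by
  obtain ⟨i₀, hi₀⟩ : (supp c).Nonempty := Finset.card_pos.mp (by omega)
  obtain ⟨v, hv⟩ := Option.ne_none_iff_exists'.mp (mem_supp_iff.mp hi₀)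
  refine ⟨v, fun chat hfull hsim w hw => Option.some_injective _ ?_⟩
  rw [← hw i₀, ← hv]
  exact hsim.apply_eq_of_mem_supp hfull hi₀

theorem weak_validity_similarity_condition
    (n t : ℕ) (ht : 0 < t) (htn : t < n)
    (V : Type*) [Nonempty V]
    (c : Fin n → Option V) (hc : (supp c).card = n - t) :
    ∃ v : V, ∀ chat : Fin n → Option V,
      (∀ i : Fin n, chat i ≠ none) → SimilarAssign chat c →
      ∀ w : V, (∀ i : Fin n, chat i = some w) → w = v :=
  weak_validity_similarity_condition_general n t htn V c hc
end
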